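/- arXiv:1803.05746 — 2 statements merged into one kernel-verified Lean document; each statement's English description precedes it below -/
import Mathlib

section
/- Let R be a commutative Noetherian local ring and M a finitely generated stable R-module. Then M is horizontally linked (i.e., M ≅ λ²M) if and only if M is stable and Ext¹_R(Tr M, R) = 0. -/
open CategoryTheory

noncomputable section

universe u

variable (R : Type u) [CommRing R]

/-- The Ext group `Ext^n_R(M, N)`. -/
abbrev ExtGrp (M N : Type u) [AddCommGroup M] [Module R M] [AddCommGroup N] [Module R N]
    (n : ℕ) : Type u :=
  ↥(((Ext R (ModuleCat.{u} R) n).obj (Opposite.op (ModuleCat.of R M))).obj (ModuleCat.of R N))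

/-- The Tor group `Tor_n^R(M, N)`. -/
abbrev TorGrp (M N : Type u) [AddCommGroup M] [Module R M] [AddCommGroup N] [Module R N]
    (n : ℕ) : Type u :=
  ↥(((Tor (ModuleCat.{u} R) n).obj (ModuleCat.of R M)).obj (ModuleCat.of R N))

/-- The `i`-th local cohomology of `M` with support in `V(J)`. -/
abbrev LocalCohomologyGrp (J : Ideal R) (i : ℕ) (M : Type u) [AddCommGroup M] [Module R M] :
    Type u :=
  ↥((localCohomology J i).obj (ModuleCat.of R M))

/-- The depth of a module over a local ring: the supremum of lengths of regular
sequences contained in the maximal ideal. -/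
def moduleDepth [IsLocalRing R] (M : Type u) [AddCommGroup M] [Module R M] : ℕ∞ :=
  sSup {n : ℕ∞ | ∃ rs : List R, (rs.length : ℕ∞) = n ∧
    (∀ r ∈ rs, r ∈ IsLocalRing.maximalIdeal R) ∧ RingTheory.Sequence.IsRegular M rs}

/-- The grade of an ideal: the supremum of lengths of regular sequences on `R` contained in it. -/
def idealGrade (I : Ideal R) : ℕ∞ :=
  sSup {n : ℕ∞ | ∃ rs : List R, (rs.length : ℕ∞) = n ∧
    (∀ r ∈ rs, r ∈ I) ∧ RingTheory.Sequence.IsRegular R rs}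

/-- The Krull dimension of a module, i.e. the dimension of `R / ann M`. -/
def moduleKrullDim (M : Type u) [AddCommGroup M] [Module R M] : WithBot ℕ∞ :=
  ringKrullDim (R ⧸ Module.annihilator R M)

/-- A local ring is Cohen-Macaulay if its depth equals its Krull dimension. -/
def IsCohenMacaulayLocalRing [IsLocalRing R] : Prop :=
  (moduleDepth R R : WithBot ℕ∞) = ringKrullDim R

/-- A module over a local ring is Cohen-Macaulay if its depth equals its dimension. -/
def IsCohenMacaulayModule [IsLocalRing R] (M : Type u) [AddCommGroup M] [Module R M] : Prop :=
  (moduleDepth R M : WithBot ℕ∞) = moduleKrullDim R M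

/-- A module over a local ring is maximal Cohen-Macaulay if its depth equals `dim R`. -/
def IsMaximalCohenMacaulay [IsLocalRing R] (M : Type u) [AddCommGroup M] [Module R M] : Prop :=
  (moduleDepth R M : WithBot ℕ∞) = ringKrullDim R

/-- A local ring is Gorenstein if it has finite injective dimension over itself, expressed by
uniform vanishing of `Ext^i(-, R)` for large `i`. -/
def IsGorensteinLocalRing [IsLocalRing R] : Prop :=
  ∃ n : ℕ, ∀ (N : ModuleCat.{u} R) (i : ℕ), n < i → Subsingleton (ExtGrp R ↥N R i)

/-- A (not necessarily local) ring is Cohen-Macaulay if all its localizations at primes are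
Cohen-Macaulay local rings. -/
def IsCohenMacaulayRing : Prop :=
  ∀ (p : Ideal R) [p.IsPrime], IsCohenMacaulayLocalRing (Localization.AtPrime p)

/-- A ring is generically Gorenstein if its localizations at all minimal primes are Gorenstein. -/
def IsGenericallyGorenstein : Prop :=
  ∀ (p : Ideal R) [p.IsPrime], p ∈ minimalPrimes R →
    IsGorensteinLocalRing (Localization.AtPrime p)

/-- Serre's condition `(S_n)`. -/
def SatisfiesSerre (n : ℕ) (M : Type u) [AddCommGroup M] [Module R M] : Prop :=
  ∀ (p : Ideal R) [p.IsPrime],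
    min (n : WithBot ℕ∞) (ringKrullDim (Localization.AtPrime p)) ≤
      (moduleDepth (Localization.AtPrime p) (LocalizedModule p.primeCompl M) : WithBot ℕ∞)

/-- The condition `S̃_n`: `depth M_q ≥ min (n, depth R_q)` for all primes `q`. -/
def SatisfiesSerreTilde (n : ℕ) (M : Type u) [AddCommGroup M] [Module R M] : Prop :=
  ∀ (p : Ideal R) [p.IsPrime],
    min (n : ℕ∞) (moduleDepth (Localization.AtPrime p) (Localization.AtPrime p)) ≤
      moduleDepth (Localization.AtPrime p) (LocalizedModule p.primeCompl M)

/-- A minimal free presentation `P₁ → P₀ → M → 0` of a module over a local ring. -/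
structure MinFreePres [IsLocalRing R] (M : Type u) [AddCommGroup M] [Module R M] where
  n0 : ℕ
  n1 : ℕ
  d : (Fin n1 → R) →ₗ[R] (Fin n0 → R)
  π : (Fin n0 → R) →ₗ[R] M
  surj : Function.Surjective π
  exact : Function.Exact d π
  min0 : LinearMap.ker π ≤ (IsLocalRing.maximalIdeal R) • (⊤ : Submodule R (Fin n0 → R))
  min1 : LinearMap.ker d ≤ (IsLocalRing.maximalIdeal R) • (⊤ : Submodule R (Fin n1 → R))

variable {R}

/-- `λM = Ω Tr M`: the image of the dualized presentation map `P₀* → P₁*`. -/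
abbrev MinFreePres.Lambda [IsLocalRing R] {M : Type u} [AddCommGroup M] [Module R M]
    (p : MinFreePres R M) : Type u :=
  ↥(LinearMap.range p.d.dualMap)

/-- The Auslander transpose `Tr M`: the cokernel of the dualized map `P₀* → P₁*`. -/
abbrev MinFreePres.Tr [IsLocalRing R] {M : Type u} [AddCommGroup M] [Module R M]
    (p : MinFreePres R M) : Type u :=
  (Module.Dual R (Fin p.n1 → R)) ⧸ (LinearMap.range p.d.dualMap)

variable (R)

/-- `M` and `N` are horizontally linked: `M ≅ λN` and `N ≅ λM`. -/
def HorizontallyLinkedPair [IsLocalRing R] (M N : Type u) [AddCommGroup M] [Module R M]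
    [AddCommGroup N] [Module R N] : Prop :=
  (∃ p : MinFreePres R N, Nonempty (M ≃ₗ[R] p.Lambda)) ∧
  (∃ p : MinFreePres R M, Nonempty (N ≃ₗ[R] p.Lambda))

/-- `M` is horizontally linked, i.e. `M ≅ λλM`. -/
def IsHorizontallyLinked [IsLocalRing R] (M : Type u) [AddCommGroup M] [Module R M] : Prop :=
  ∃ (p : MinFreePres R M) (q : MinFreePres R p.Lambda), Nonempty (M ≃ₗ[R] q.Lambda)

/-- A module is stable if it has no nonzero free direct summand. -/
def IsStable (M : Type u) [AddCommGroup M] [Module R M] : Prop :=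
  ∀ (N N' : Submodule R M), IsCompl N N' → Module.Free R ↥N → N = ⊥

/-- A module is a (first) syzygy if it embeds into a finitely generated free module. -/
def IsFirstSyzygy (M : Type u) [AddCommGroup M] [Module R M] : Prop :=
  ∃ (k : ℕ) (f : M →ₗ[R] (Fin k → R)), Function.Injective f

/-- `M` is an `n`-th syzygy module. -/
def IsNthSyzygy : ℕ → ModuleCat.{u} R → Prop
  | 0, _ => True
  | n + 1, M => ∃ (k : ℕ) (f : M →ₗ[R] (Fin k → R)), Function.Injective f ∧
      IsNthSyzygy n (ModuleCat.of R ((Fin k → R) ⧸ LinearMap.range f))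

/-- `M` is totally `C`-reflexive. -/
def IsTotallyReflexive (C M : Type u) [AddCommGroup C] [Module R C]
    [AddCommGroup M] [Module R M] : Prop :=
  Function.Bijective ((LinearMap.id : (M →ₗ[R] C) →ₗ[R] (M →ₗ[R] C)).flip) ∧
  (∀ i : ℕ, 0 < i → Subsingleton (ExtGrp R M C i)) ∧
  (∀ i : ℕ, 0 < i → Subsingleton (ExtGrp R (M →ₗ[R] C) C i))

/-- `G_C`-dimension of `M` is at most `n`: there is a resolution of length `n` by
totally `C`-reflexive modules. -/
def GdimLE (C : Type u) [AddCommGroup C] [Module R C] : ℕ → ModuleCat.{u} R → Prop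
  | 0, M => IsTotallyReflexive R C ↥M
  | n + 1, M => ∃ (K X : ModuleCat.{u} R) (f : K →ₗ[R] X) (g : X →ₗ[R] M),
      IsTotallyReflexive R C ↥X ∧ Function.Injective f ∧ Function.Surjective g ∧
      Function.Exact f g ∧ GdimLE C n K

/-- `M` has finite `G_C`-dimension. -/
def HasFiniteGdim (C M : Type u) [AddCommGroup C] [Module R C] [AddCommGroup M] [Module R M] :
    Prop :=
  ∃ n : ℕ, GdimLE R C n (ModuleCat.of R M)

/-- `G_C`-dim of `M` equals `n`. -/
def GdimEq (C M : Type u) [AddCommGroup C] [Module R C] [AddCommGroup M] [Module R M]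
    (n : ℕ) : Prop :=
  GdimLE R C n (ModuleCat.of R M) ∧ ∀ m : ℕ, GdimLE R C m (ModuleCat.of R M) → n ≤ m

/-- A semidualizing module. -/
def IsSemidualizing (C : Type u) [AddCommGroup C] [Module R C] : Prop :=
  Module.Finite R C ∧ Function.Bijective (LinearMap.lsmul R C) ∧
  ∀ i : ℕ, 0 < i → Subsingleton (ExtGrp R C C i)

/-- A canonical module over a Cohen-Macaulay local ring: a semidualizing module of finite
injective dimension. -/
def IsCanonicalModule [IsLocalRing R] (w : Type u) [AddCommGroup w] [Module R w] : Prop :=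
  IsSemidualizing R w ∧
  ∃ n : ℕ, ∀ (N : ModuleCat.{u} R) (i : ℕ), n < i → Subsingleton (ExtGrp R ↥N w i)

/-- Membership in the Auslander class `A_C`. -/
def InAuslanderClass (C M : Type u) [AddCommGroup C] [Module R C]
    [AddCommGroup M] [Module R M] : Prop :=
  Function.Bijective (TensorProduct.mk R M C) ∧
  (∀ i : ℕ, 0 < i → Subsingleton (TorGrp R M C i)) ∧
  (∀ i : ℕ, 0 < i → Subsingleton (ExtGrp R C (TensorProduct R M C) i))

/-- The attached primes of a module. -/
def attachedPrimes (M : Type u) [AddCommGroup M] [Module R M] : Set (Ideal R) :=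
  {p | p.IsPrime ∧ ∃ N : Submodule R M, p = Module.annihilator R (M ⧸ N)}

/-- An equidimensional ring: `dim R/p = dim R` for every minimal prime `p`. -/
def IsEquidimensionalRing : Prop :=
  ∀ p ∈ minimalPrimes R, ringKrullDim (R ⧸ p) = ringKrullDim R

/-- A formally equidimensional local ring: its completion is equidimensional. -/
def IsFormallyEquidimensional [IsLocalRing R] : Prop :=
  IsEquidimensionalRing (AdicCompletion (IsLocalRing.maximalIdeal R) R)

/-- A witness that `R` is the homomorphic image of a Cohen-Macaulay ring. -/
structure CMImageWitness : Type (u + 1) where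
  S : Type u
  [instCommRing : CommRing S]
  [instNoeth : IsNoetherianRing S]
  cm : IsCohenMacaulayRing S
  f : S →+* R
  surj : Function.Surjective f

/-- `R` is a homomorphic image of a Cohen-Macaulay ring. -/
def IsHomImageOfCM : Prop := Nonempty (CMImageWitness R)


/-! ### Auxiliary machinery for statement1 -/

namespace MSAux

open CategoryTheory Limits

variable {R}

theorem mem_smul_top_pi {n : ℕ} (I : Ideal R) (x : Fin n → R) :
    x ∈ (I • ⊤ : Submodule R (Fin n → R)) ↔ ∀ i, x i ∈ I := by
  constructor
  · intro hx i
    refine Submodule.smul_induction_on hx (fun r hr m _ => ?_) (fun a b ha hb => ?_)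
    · simpa using I.mul_mem_right (m i) hr
    · exact I.add_mem ha hb
  · intro h
    have hx : x = ∑ i, (x i) • (Pi.single i (1 : R) : Fin n → R) := by
      funext j
      rw [Finset.sum_apply]
      simp [Pi.single_apply]
    rw [hx]
    exact Submodule.sum_mem _ fun i _ => Submodule.smul_mem_smul (h i) trivial


theorem stable_pairing [IsLocalRing R] {M : Type u} [AddCommGroup M] [Module R M]
    (hst : IsStable R M) (φ : Module.Dual R M) (x : M) :
    φ x ∈ IsLocalRing.maximalIdeal R := by
  by_contra hu
  have hu : IsUnit (φ x) := by
    simpa [IsLocalRing.mem_maximalIdeal, mem_nonunits_iff, not_not] using hu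
  set σ : Module.Dual R M := (↑hu.unit⁻¹ : R) • φ with hσ
  have hσx : σ x = 1 := by
    have h1 : ((hu.unit⁻¹ : Rˣ) : R) * φ x = 1 := by
      have := hu.unit.inv_mul
      rwa [hu.unit_spec] at this
    simpa [hσ] using h1
  set N : Submodule R M := Submodule.span R {x}
  set N' : Submodule R M := LinearMap.ker σ
  have hcompl : IsCompl N N' := by
    constructor
    · rw [disjoint_iff]
      ext y
      simp only [Submodule.mem_inf, Submodule.mem_bot]
      constructor
      · rintro ⟨hy1, hy2⟩
        obtain ⟨r, rfl⟩ := Submodule.mem_span_singleton.mp hy1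
        have : σ (r • x) = r := by simp [hσx]
        rw [LinearMap.mem_ker] at hy2
        rw [hy2] at this
        rw [← this, zero_smul]
      · rintro rfl; simp
    · rw [codisjoint_iff_le_sup]
      intro z _
      have : z = σ z • x + (z - σ z • x) := by abel
      rw [this]
      refine Submodule.add_mem_sup (Submodule.smul_mem _ _ (Submodule.mem_span_singleton_self x)) ?_
      simp [N', LinearMap.mem_ker, hσx, mul_comm]
  have hfree : Module.Free R ↥N := by
    have e : R ≃ₗ[R] ↥N := by
      refine LinearEquiv.ofBijective
        (LinearMap.toSpanSingleton R M x |>.codRestrict N fun r => ?_) ⟨?_, ?_⟩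
      · exact Submodule.smul_mem _ _ (Submodule.mem_span_singleton_self x)
      · intro a b hab
        have : σ (a • x) = σ (b • x) := by
          have := congrArg (fun t : ↥N => σ (t : M)) hab
          exact this
        simpa [hσx] using this
      · rintro ⟨y, hy⟩
        obtain ⟨r, rfl⟩ := Submodule.mem_span_singleton.mp hy
        exact ⟨r, rfl⟩
    exact Module.Free.of_equiv e
  have hN := hst N N' hcompl hfree
  have hxN : x ∈ N := Submodule.mem_span_singleton_self x
  rw [hN] at hxN
  simp only [Submodule.mem_bot] at hxN
  rw [hxN] at hσx
  simp at hσx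


/-- Every f.g. module over a local ring has a minimal free cover. -/
theorem exists_minimal_cover [IsLocalRing R] (N : Type u) [AddCommGroup N] [Module R N]
    [Module.Finite R N] :
    ∃ (n : ℕ) (φ : (Fin n → R) →ₗ[R] N), Function.Surjective φ ∧
      LinearMap.ker φ ≤ (IsLocalRing.maximalIdeal R) • (⊤ : Submodule R (Fin n → R)) := by
  classical
  have hex : ∃ n : ℕ, ∃ φ : (Fin n → R) →ₗ[R] N, Function.Surjective φ := by
    obtain ⟨n, s, hs⟩ := Module.Finite.exists_fin (R := R) (M := N)
    refine ⟨n, Fintype.linearCombination R s, ?_⟩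
    rw [← LinearMap.range_eq_top, Fintype.range_linearCombination, hs]
  let n := Nat.find hex
  obtain ⟨φ, hφ⟩ := Nat.find_spec hex
  refine ⟨n, φ, hφ, ?_⟩
  intro a ha
  rw [mem_smul_top_pi]
  by_contra hbad
  push_neg at hbad
  obtain ⟨j, hj⟩ := hbad
  have hu : IsUnit (a j) := by
    simpa [IsLocalRing.mem_maximalIdeal, mem_nonunits_iff, not_not] using hj
  -- generators
  set v : Fin n → N := fun i => φ (Pi.single i 1) with hv
  have hφv : ∀ x : Fin n → R, φ x = ∑ i, x i • v i := by
    intro x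
    have hx : x = ∑ i, (x i) • (Pi.single i (1 : R) : Fin n → R) := by
      funext k
      rw [Finset.sum_apply]
      simp [Pi.single_apply]
    conv_lhs => rw [hx]
    simp [hv]
  have hspanv : Submodule.span R (Set.range v) = ⊤ := by
    rw [Submodule.eq_top_iff']
    intro y
    obtain ⟨x, rfl⟩ := hφ y
    rw [hφv]
    exact Submodule.sum_mem _ fun i _ =>
      Submodule.smul_mem _ _ (Submodule.subset_span ⟨i, rfl⟩)
  -- n must be positive
  rcases Nat.eq_zero_or_pos n with hn0 | hnpos
  · exact hj (by
      have : a = 0 := by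
        funext i
        exact absurd i.2 (by omega)
      simp [this])
  obtain ⟨m, hm⟩ : ∃ m, n = m + 1 := ⟨n - 1, by omega⟩
  -- relation: sum a i • v i = 0
  have hrel : ∑ i, a i • v i = 0 := by rw [← hφv]; exact ha
  -- v j in span of the others
  have hkey : ∀ i : Fin n, v i ∈ Submodule.span R (v '' {i : Fin n | i ≠ j}) := by
    intro i
    rcases eq_or_ne i j with rfl | hne
    · -- v j = -(a j)⁻¹ • ∑_{i ≠ j} a i • v i
      have hsplit : a i • v i = -∑ k ∈ Finset.univ.erase i, a k • v k := by
        have h2 := hrel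
        rw [← Finset.add_sum_erase _ _ (Finset.mem_univ i)] at h2
        rw [eq_neg_iff_add_eq_zero]
        exact h2
      have hvj : v i = (↑hu.unit⁻¹ : R) • (a i • v i) := by
        rw [smul_smul]
        have h3 : (↑hu.unit⁻¹ : R) * a i = 1 := by
          have := hu.unit.inv_mul
          rwa [hu.unit_spec] at this
        rw [h3, one_smul]
      rw [hvj, hsplit]
      refine Submodule.smul_mem _ _ (Submodule.neg_mem _ (Submodule.sum_mem _ fun k hk => ?_))
      have hkne : k ≠ i := Finset.ne_of_mem_erase hk
      exact Submodule.smul_mem _ _ (Submodule.subset_span ⟨k, hkne, rfl⟩)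
    · exact Submodule.subset_span ⟨i, hne, rfl⟩
  have hspan' : Submodule.span R (v '' {i : Fin n | i ≠ j}) = ⊤ := by
    rw [eq_top_iff, ← hspanv]
    rw [Submodule.span_le]
    rintro _ ⟨i, rfl⟩
    exact hkey i
  -- build a surjection from Fin m → R, contradicting minimality of n
  have hcard : Fintype.card {i : Fin n // i ≠ j} = m := by
    simp [Fintype.card_subtype_compl, hm]
  let e : Fin m ≃ {i : Fin n // i ≠ j} := (Fintype.equivFinOfCardEq hcard).symm
  let w : Fin m → N := fun t => v (e t)
  have hrw : Set.range w = v '' {i : Fin n | i ≠ j} := by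
    ext y
    constructor
    · rintro ⟨t, rfl⟩
      exact ⟨e t, (e t).2, rfl⟩
    · rintro ⟨i, hi, rfl⟩
      exact ⟨e.symm ⟨i, hi⟩, by simp [w]⟩
  have hψ : Function.Surjective (Fintype.linearCombination R w) := by
    intro y
    have : y ∈ LinearMap.range (Fintype.linearCombination R w) := by
      rw [Fintype.range_linearCombination, hrw, hspan']
      trivial
    exact this
  exact absurd ⟨Fintype.linearCombination R w, hψ⟩ (Nat.find_min hex (by omega))


/-- Existence of a minimal free presentation. -/
theorem exists_minFreePres [IsNoetherianRing R] [IsLocalRing R] (M : Type u) [AddCommGroup M]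
    [Module R M] [Module.Finite R M] : Nonempty (MinFreePres R M) := by
  obtain ⟨n0, π, hπs, hπm⟩ := exists_minimal_cover (R := R) M
  have : Module.Finite R ↥(LinearMap.ker π) := by
    have : IsNoetherian R (Fin n0 → R) := inferInstance
    exact Module.Finite.of_injective (LinearMap.ker π).subtype Subtype.coe_injective
  obtain ⟨n1, φ, hφs, hφm⟩ := exists_minimal_cover (R := R) ↥(LinearMap.ker π)
  refine ⟨⟨n0, n1, (LinearMap.ker π).subtype ∘ₗ φ, π, hπs, ?_, hπm, ?_⟩⟩
  · rw [LinearMap.exact_iff]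
    rw [LinearMap.range_comp, LinearMap.range_eq_top.mpr hφs, Submodule.map_top,
      Submodule.range_subtype]
  · intro a ha
    refine hφm ?_
    rw [LinearMap.mem_ker] at ha ⊢
    exact Subtype.coe_injective (by simpa using ha)



/-- Functionals vanishing on the kernel of a surjection factor through it. -/
theorem factor_through_surjective {M N P : Type u} [AddCommGroup M] [Module R M]
    [AddCommGroup N] [Module R N] [AddCommGroup P] [Module R P]
    (π : M →ₗ[R] N) (hπ : Function.Surjective π) (f : M →ₗ[R] P)
    (hf : LinearMap.ker π ≤ LinearMap.ker f) : ∃ φ : N →ₗ[R] P, f = φ ∘ₗ π := by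
  let e := LinearMap.quotKerEquivOfSurjective π hπ
  refine ⟨((LinearMap.ker π).liftQ f hf) ∘ₗ (e.symm : N →ₗ[R] _), ?_⟩
  ext x
  have he : e.symm (π x) = Submodule.Quotient.mk x := by
    apply e.injective
    simp only [LinearEquiv.apply_symm_apply]
    rfl
  simp [he]


private theorem pi_eq_sum_single {n : ℕ} (u : Fin n → R) :
    u = ∑ i, (u i) • (Pi.single i (1 : R) : Fin n → R) := by
  funext k
  rw [Finset.sum_apply]
  simp [Pi.single_apply]

/-- The standard self-duality of `Fin n → R`, given by the pairing `∑ i, u i * v i`. -/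
def epair (n : ℕ) : (Fin n → R) ≃ₗ[R] Module.Dual R (Fin n → R) :=
  LinearEquiv.ofLinear
    (LinearMap.mk₂ R (fun v u => ∑ i, u i * v i)
      (fun v v' u => by simp [mul_add, Finset.sum_add_distrib])
      (fun r v u => by simp [Finset.mul_sum, mul_left_comm])
      (fun v u u' => by simp [add_mul, Finset.sum_add_distrib])
      (fun r v u => by simp [Finset.mul_sum, mul_assoc]) |>.flip.flip)
    ({ toFun := fun h j => h (Pi.single j 1)
       map_add' := fun h h' => by funext j; simp
       map_smul' := fun r h => by funext j; simp })
    (by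
      refine LinearMap.ext fun h => LinearMap.ext fun u => ?_
      show ∑ i, u i * h (Pi.single i 1) = h u
      conv_rhs => rw [pi_eq_sum_single u]
      rw [map_sum]
      exact Finset.sum_congr rfl fun i _ => by rw [map_smul, smul_eq_mul]
      )
    (by
      refine LinearMap.ext fun v => funext fun j => ?_
      show ∑ i, (Pi.single j (1:R) : Fin n → R) i * v i = v j
      simp [Pi.single_apply]
      )

theorem epair_apply {n : ℕ} (v u : Fin n → R) : epair n v u = ∑ i, u i * v i := rfl

theorem epair_comm {n : ℕ} (v u : Fin n → R) : epair n v u = epair n u v := by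
  rw [epair_apply, epair_apply]
  exact Finset.sum_congr rfl fun i _ => mul_comm _ _

theorem epair_symm_apply {n : ℕ} (v : Fin n → R) (h : Module.Dual R (Fin n → R)) :
    epair n v ((epair n).symm h) = h v := by
  rw [epair_comm, LinearEquiv.apply_symm_apply]

theorem epair_symm_coord {n : ℕ} (h : Module.Dual R (Fin n → R)) (j : Fin n) :
    (epair n).symm h j = h (Pi.single j 1) := rfl

/-- Torsionless (torsion-free in the functional sense): functionals separate points. -/
def Torsionless (R : Type u) [CommRing R] (M : Type u) [AddCommGroup M] [Module R M] : Prop :=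
  ∀ x : M, (∀ φ : Module.Dual R M, φ x = 0) → x = 0

/-- The concrete criterion equivalent to `Ext¹(Tr M, R) = 0`. -/
def ReflCrit (R : Type u) [CommRing R] {n1 n0 : ℕ} (d : (Fin n1 → R) →ₗ[R] (Fin n0 → R)) :
    Prop :=
  ∀ g : Module.Dual R (Fin n0 → R) →ₗ[R] R,
    (∀ b : Module.Dual R (Fin n0 → R), d.dualMap b = 0 → g b = 0) →
    ∃ h : Module.Dual R (Fin n1 → R) →ₗ[R] R, ∀ b, g b = h (d.dualMap b)



theorem crit_iff_torsionless {n1 n0 : ℕ} {M : Type u} [AddCommGroup M] [Module R M]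
    (d : (Fin n1 → R) →ₗ[R] (Fin n0 → R)) (π : (Fin n0 → R) →ₗ[R] M)
    (hsurj : Function.Surjective π) (hexact : Function.Exact d π) :
    ReflCrit R d ↔ Torsionless R M := by
  have hπd : ∀ y, π (d y) = 0 := fun y => (hexact (d y)).mpr ⟨y, rfl⟩ 
  constructor
  · intro hc x hx
    obtain ⟨v, rfl⟩ := hsurj x
    set g : Module.Dual R (Fin n0 → R) →ₗ[R] R := Module.Dual.eval R (Fin n0 → R) v with hg
    have hgker : ∀ b : Module.Dual R (Fin n0 → R), d.dualMap b = 0 → g b = 0 := by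
      intro b hb
      have hker : LinearMap.ker π ≤ LinearMap.ker b := by
        intro z hz
        rw [LinearMap.mem_ker] at hz ⊢
        obtain ⟨y, rfl⟩ := (hexact z).mp hz
        have := congrArg (fun t => t y) hb
        simpa [LinearMap.dualMap_apply] using this
      obtain ⟨φ, rfl⟩ := factor_through_surjective π hsurj b hker
      simpa [hg] using hx φ
    obtain ⟨h, hh⟩ := hc g hgker
    set w := (Module.evalEquiv R (Fin n1 → R)).symm h with hw
    have hhw : ∀ f : Module.Dual R (Fin n1 → R), h f = f w := by
      intro f
      have : Module.evalEquiv R (Fin n1 → R) w = h := by rw [hw, LinearEquiv.apply_symm_apply]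
      rw [← this]
      rfl
    have hvd : v = d w := by
      have : ∀ f : Module.Dual R (Fin n0 → R), f v = f (d w) := by
        intro f
        have := hh f
        rw [hhw] at this
        simpa [hg, LinearMap.dualMap_apply] using this
      have h0 : Module.Dual.eval R (Fin n0 → R) (v - d w) = 0 := by
        apply LinearMap.ext
        intro f
        simp [this f]
      have := (Module.bijective_dual_eval R (Fin n0 → R)).injective
        (a₁ := v - d w) (a₂ := 0) (by simpa using h0)
      rwa [sub_eq_zero] at this
    rw [hvd]
    exact hπd w
  · intro ht g hg
    set x := (Module.evalEquiv R (Fin n0 → R)).symm g with hx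
    have hgx : ∀ f : Module.Dual R (Fin n0 → R), g f = f x := by
      intro f
      have : Module.evalEquiv R (Fin n0 → R) x = g := by rw [hx, LinearEquiv.apply_symm_apply]
      rw [← this]
      rfl
    have hπx : π x = 0 := by
      apply ht
      intro φ
      have hc : d.dualMap (φ ∘ₗ π) = 0 := by
        apply LinearMap.ext
        intro y
        simp [LinearMap.dualMap_apply, hπd y]
      have := hg (φ ∘ₗ π) hc
      rw [hgx] at this
      simpa using this
    obtain ⟨y, hy⟩ := (hexact x).mp hπx
    exact ⟨Module.Dual.eval R (Fin n1 → R) y, fun b => by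
      rw [hgx, ← hy]
      simp [LinearMap.dualMap_apply]⟩


section MainConstr
variable [IsNoetherianRing R] [IsLocalRing R]
variable {M : Type u} [AddCommGroup M] [Module R M] [Module.Finite R M]

theorem dualMap_injective {N P : Type u} [AddCommGroup N] [Module R N] [AddCommGroup P]
    [Module R P] (π : N →ₗ[R] P) (hπ : Function.Surjective π) :
    Function.Injective π.dualMap := by
  intro f g hfg
  apply LinearMap.ext
  intro y
  obtain ⟨x, rfl⟩ := hπ y
  exact congrArg (fun t => t x) hfg

/-- Main construction for the backward direction. -/
theorem backward_construct (hstable : IsStable R M) (htl : Torsionless R M)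
    (p : MinFreePres R M) : ∃ q : MinFreePres R p.Lambda, Nonempty (M ≃ₗ[R] q.Lambda) := by
  classical
  set δ := p.d.dualMap with hδ
  set e := epair (R := R) p.n0 with he
  -- kernel of δ is the image of the dual of π
  have hπd : ∀ y, p.π (p.d y) = 0 := fun y => (p.exact (p.d y)).mpr ⟨y, rfl⟩
  have hkerδ : LinearMap.ker δ = LinearMap.range p.π.dualMap := by
    ext b
    simp only [LinearMap.mem_ker, LinearMap.mem_range]
    constructor
    · intro hb
      have hker : LinearMap.ker p.π ≤ LinearMap.ker b := by
        intro z hz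
        rw [LinearMap.mem_ker] at hz ⊢
        obtain ⟨y, rfl⟩ := (p.exact z).mp hz
        have := congrArg (fun t => t y) hb
        simpa [hδ, LinearMap.dualMap_apply] using this
      obtain ⟨φ, hφ⟩ := factor_through_surjective p.π p.surj b hker
      exact ⟨φ, hφ.symm⟩
    · rintro ⟨φ, rfl⟩
      apply LinearMap.ext
      intro y
      simp [hδ, LinearMap.dualMap_apply, hπd y]
  -- the dual of M is finitely generated
  have hMd : Module.Finite R (Module.Dual R M) :=
    Module.Finite.of_injective p.π.dualMap (dualMap_injective p.π p.surj)
  obtain ⟨m, ψ, hψs, hψm⟩ := exists_minimal_cover (R := R) (Module.Dual R M)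
  set qd : (Fin m → R) →ₗ[R] (Fin p.n0 → R) :=
    (e.symm : Module.Dual R (Fin p.n0 → R) →ₗ[R] _) ∘ₗ p.π.dualMap ∘ₗ ψ with hqd
  set qπ : (Fin p.n0 → R) →ₗ[R] p.Lambda :=
    δ.rangeRestrict ∘ₗ (e : (Fin p.n0 → R) →ₗ[R] _) with hqπ
  have hqπ_app : ∀ v, ((qπ v : Module.Dual R (Fin p.n1 → R))) = δ (e v) := fun v => rfl
  have hqd_app : ∀ a, qd a = e.symm (p.π.dualMap (ψ a)) := fun a => rfl
  have hsurj : Function.Surjective qπ := by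
    intro y
    obtain ⟨b, hb⟩ := δ.surjective_rangeRestrict y
    refine ⟨e.symm b, ?_⟩
    apply Subtype.ext
    rw [hqπ_app, e.apply_symm_apply, ← hb]
    rfl
  have hexact : Function.Exact qd qπ := by
    rw [LinearMap.exact_iff]
    ext x
    simp only [LinearMap.mem_ker, LinearMap.mem_range]
    constructor
    · intro hx
      have hx' : e x ∈ LinearMap.ker δ := by
        have h0 : δ (e x) = 0 := by
          rw [← hqπ_app]
          exact congrArg (Submodule.subtype (LinearMap.range δ)) hx
        simpa [LinearMap.mem_ker] using h0
      rw [hkerδ] at hx'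
      obtain ⟨φ, hφ⟩ := hx'
      obtain ⟨a, ha⟩ := hψs φ
      refine ⟨a, ?_⟩
      rw [hqd_app, ha, hφ]
      exact e.symm_apply_apply x
    · rintro ⟨a, rfl⟩
      apply Subtype.ext
      rw [hqπ_app, hqd_app, e.apply_symm_apply]
      have : p.π.dualMap (ψ a) ∈ LinearMap.ker δ := by
        rw [hkerδ]
        exact ⟨ψ a, rfl⟩
      simpa [LinearMap.mem_ker] using this
  have hmin0 : LinearMap.ker qπ ≤ (IsLocalRing.maximalIdeal R) • ⊤ := by
    intro x hx
    rw [LinearMap.mem_ker] at hx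
    have hx' : e x ∈ LinearMap.ker δ := by
      have h0 : δ (e x) = 0 := by
        rw [← hqπ_app]
        exact congrArg (Submodule.subtype (LinearMap.range δ)) hx
      simpa [LinearMap.mem_ker] using h0
    rw [hkerδ] at hx'
    obtain ⟨φ, hφ⟩ := hx'
    rw [mem_smul_top_pi]
    intro j
    have hxj : x j = (p.π.dualMap φ) (Pi.single j 1) := by
      have hxe : x = e.symm (p.π.dualMap φ) := by rw [hφ]; exact (e.symm_apply_apply x).symm
      rw [hxe, he, epair_symm_coord]
    rw [hxj]
    exact stable_pairing hstable φ _
  have hmin1 : LinearMap.ker qd ≤ (IsLocalRing.maximalIdeal R) • ⊤ := by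
    intro a ha
    rw [LinearMap.mem_ker] at ha
    have h1 : p.π.dualMap (ψ a) = 0 := by
      have h2 := congrArg e ha
      rw [hqd_app, e.apply_symm_apply, map_zero] at h2
      exact h2
    have h2 : ψ a = 0 := dualMap_injective p.π p.surj (by simpa using h1)
    exact hψm (by simpa [LinearMap.mem_ker] using h2)
  -- the isomorphism M ≃ₗ range qd.dualMap
  set Θ : M →ₗ[R] Module.Dual R (Fin m → R) :=
    ψ.dualMap ∘ₗ Module.Dual.eval R M with hΘ
  have hΘapp : ∀ (x : M) (a : Fin m → R), Θ x a = ψ a x := fun x a => rfl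
  have hkey : ∀ v : Fin p.n0 → R, qd.dualMap (e v) = Θ (p.π v) := by
    intro v
    apply LinearMap.ext
    intro a
    rw [LinearMap.dualMap_apply, hΘapp]
    show (e v) (qd a) = ψ a (p.π v)
    rw [hqd_app, he, epair_symm_apply]
    rfl
  have hinj : Function.Injective Θ := by
    rw [← LinearMap.ker_eq_bot, Submodule.eq_bot_iff]
    intro x hx
    rw [LinearMap.mem_ker] at hx
    apply htl
    intro φ
    obtain ⟨a, rfl⟩ := hψs φ
    have := congrArg (fun t => t a) hx
    simpa [hΘapp] using this
  have hrange : LinearMap.range qd.dualMap = LinearMap.range Θ := by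
    ext f
    simp only [LinearMap.mem_range]
    constructor
    · rintro ⟨g, rfl⟩
      exact ⟨p.π (e.symm g), by rw [← hkey (e.symm g), e.apply_symm_apply]⟩
    · rintro ⟨x, rfl⟩
      obtain ⟨v, rfl⟩ := p.surj x
      exact ⟨e v, hkey v⟩
  have iso : M ≃ₗ[R] ↥(LinearMap.range qd.dualMap) :=
    (LinearEquiv.ofInjective Θ hinj).trans (LinearEquiv.ofEq _ _ hrange.symm)
  exact ⟨⟨p.n0, m, qd, qπ, hsurj, hexact, hmin0, hmin1⟩, ⟨iso⟩⟩


end MainConstr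

section Resolution
variable {A B : Type u} [AddCommGroup A] [Module R A] [AddCommGroup B] [Module R B]
variable [Module.Projective R A] [Module.Projective R B]
variable (δ : B →ₗ[R] A)

instance projA : Projective (ModuleCat.of R A) := (_root_.IsProjective.iff_projective _).mp inferInstance
instance projB : Projective (ModuleCat.of R B) := (_root_.IsProjective.iff_projective _).mp inferInstance

/-- A projective resolution of `A ⧸ range δ` starting with `B → A`. -/
def resSucc {X₀ X₁ : ModuleCat.{u} R} (f : X₁ ⟶ X₀) :
    Σ' (X₂ : ModuleCat.{u} R) (d : X₂ ⟶ X₁), d ≫ f = 0 :=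
  ⟨Projective.syzygies f, Projective.d f, show Projective.d f ≫ f = 0 from
      (Category.assoc (Projective.π (kernel f)) (kernel.ι f) f).trans (by rw [kernel.condition, comp_zero]; rfl)⟩

def resCx : ChainComplex (ModuleCat.{u} R) ℕ :=
  ChainComplex.mk' (ModuleCat.of R A) (ModuleCat.of R B) (ModuleCat.ofHom δ) resSucc

lemma resCx_X0 : (resCx δ).X 0 = ModuleCat.of R A := rfl
lemma resCx_X1 : (resCx δ).X 1 = ModuleCat.of R B := rfl

lemma resCx_d_1_0 : (resCx δ).d 1 0 = ModuleCat.ofHom δ := by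
  simp [resCx]

lemma resCx_exactAt_succ (n : ℕ) : (resCx δ).ExactAt (n + 1) := by
  rw [HomologicalComplex.exactAt_iff' _ (n + 1 + 1) (n + 1) n (by simp) (by simp)]
  refine (ShortComplex.exact_iff_of_iso ?_).1 (CategoryTheory.exact_d_f ((resCx δ).d (n + 1) n))
  refine ShortComplex.isoMk (ChainComplex.mk'XIso (ModuleCat.of R A) (ModuleCat.of R B)
    (ModuleCat.ofHom δ) resSucc n).symm (Iso.refl _) (Iso.refl _) ?_ ?_
  · have h := ChainComplex.mk'_d (ModuleCat.of R A) (ModuleCat.of R B) (ModuleCat.ofHom δ) resSucc n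
    exact (congrArg (fun t => (ChainComplex.mk'XIso (ModuleCat.of R A) (ModuleCat.of R B)
      (ModuleCat.ofHom δ) resSucc n).inv ≫ t) h).trans
      ((Iso.inv_hom_id_assoc _ _).trans (Category.comp_id _).symm)
  · exact (Category.id_comp _).trans (Category.comp_id _).symm

instance resCx_projective (n : ℕ) : Projective ((resCx δ).X n) := by
  obtain (_ | _ | _ | n) := n
  · exact projA
  · exact projB
  · apply Projective.projective_over
  · apply Projective.projective_over

/-- The projective resolution of the cokernel of `δ`. -/
def resOfHom : ProjectiveResolution (ModuleCat.of R (A ⧸ LinearMap.range δ)) where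
  complex := resCx δ
  π := (ChainComplex.toSingle₀Equiv _ _).symm ⟨ModuleCat.ofHom (LinearMap.range δ).mkQ, by
        rw [resCx_d_1_0]
        apply ModuleCat.hom_ext
        apply LinearMap.ext
        intro b
        show (LinearMap.range δ).mkQ (δ b) = 0
        rw [Submodule.mkQ_apply, Submodule.Quotient.mk_eq_zero]
        exact ⟨b, rfl⟩⟩
  quasiIso := ⟨fun n => by
    cases n with
    | zero =>
      rw [ChainComplex.quasiIsoAt₀_iff, ShortComplex.quasiIso_iff_of_zeros']
      · have hc : ModuleCat.ofHom δ ≫ ModuleCat.ofHom (LinearMap.range δ).mkQ = 0 := by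
          apply ModuleCat.hom_ext
          apply LinearMap.ext
          intro b
          show (LinearMap.range δ).mkQ (δ b) = 0
          rw [Submodule.mkQ_apply, Submodule.Quotient.mk_eq_zero]
          exact ⟨b, rfl⟩
        have hexact : (ShortComplex.mk (ModuleCat.ofHom δ)
            (ModuleCat.ofHom (LinearMap.range δ).mkQ) hc).Exact := by
          rw [ShortComplex.moduleCat_exact_iff]
          intro (a : A) ha
          have ha' : (LinearMap.range δ).mkQ a = 0 := ha
          rw [Submodule.mkQ_apply, Submodule.Quotient.mk_eq_zero] at ha'
          exact ha'
        have hepi : Epi (ShortComplex.mk (ModuleCat.ofHom δ)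
            (ModuleCat.ofHom (LinearMap.range δ).mkQ) hc).g := by
          rw [ModuleCat.epi_iff_surjective]
          exact Submodule.mkQ_surjective _
        refine (ShortComplex.exact_and_epi_g_iff_of_iso ?_).2 ⟨hexact, hepi⟩
        refine ShortComplex.isoMk (Iso.refl _) (Iso.refl _) (Iso.refl _) ?_ ?_
        · simp [resCx]
          rfl
        · simp [ChainComplex.toSingle₀Equiv]
          rfl
      all_goals rfl
    | succ n =>
      rw [quasiIsoAt_iff_exactAt']
      · apply resCx_exactAt_succ
      · apply ChainComplex.exactAt_succ_single_obj⟩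

end Resolution

section ExtComp
variable {A B : Type u} [AddCommGroup A] [Module R A] [AddCommGroup B] [Module R B]
variable [Module.Projective R A] [Module.Projective R B]
variable (δ : B →ₗ[R] A)

theorem subsingleton_ext_one_iff :
    Subsingleton ↥(((Ext R (ModuleCat.{u} R) 1).obj
        (Opposite.op (ModuleCat.of R (A ⧸ LinearMap.range δ)))).obj (ModuleCat.of R R)) ↔
      ∀ g : B →ₗ[R] R, (∀ b, δ b = 0 → g b = 0) →
        ∃ h : A →ₗ[R] R, ∀ b, g b = h (δ b) := by
  set Y : ModuleCat.{u} R := ModuleCat.of R R with hY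
  set PR := resOfHom δ with hPR
  set K := PR.complex.linearYonedaObj R Y with hK
  have e1 := PR.isoExt (R := R) 1 Y
  -- Subsingleton iff IsZero of the Ext object
  have h1 : Subsingleton ↥(((Ext R (ModuleCat.{u} R) 1).obj
      (Opposite.op (ModuleCat.of R (A ⧸ LinearMap.range δ)))).obj Y) ↔
      IsZero (K.homology 1) := by
    constructor
    · intro hs
      exact (ModuleCat.isZero_of_subsingleton _).of_iso e1.symm
    · intro hz
      have hz' := hz.of_iso e1
      rw [IsZero.iff_id_eq_zero] at hz'
      constructor
      intro a b
      have ha := congrArg (fun t => t a) hz'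
      have hb := congrArg (fun t => t b) hz'
      simp only at ha hb
      calc a = 0 := ha
        _ = b := hb.symm
  rw [h1, ← HomologicalComplex.exactAt_iff_isZero_homology,
    HomologicalComplex.exactAt_iff' K 0 1 2 (by simp) (by simp),
    ShortComplex.moduleCat_exact_iff]
  -- K.d as precomposition
  have hd : ∀ (i j : ℕ) (t : (resCx δ).X i ⟶ Y), (K.d i j) t = (resCx δ).d j i ≫ t := by
    intro i j t
    have h0 := ConcreteCategory.congr_hom (ChainComplex.linearYonedaObj_d PR.complex R Y i j) t
    exact h0.trans (Linear.leftComp_apply _ _ _ _)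
  -- exactness of the resolution complex at 1, elementwise
  have hres : ∀ x : B, δ x = 0 → ∃ y : ((resCx δ).X 2), ((resCx δ).d 2 1) y = x := by
    have hE := resCx_exactAt_succ δ 0
    rw [HomologicalComplex.exactAt_iff' _ 2 1 0 (by simp) (by simp),
      ShortComplex.moduleCat_exact_iff] at hE
    intro x hx
    exact hE x (by
      show ((resCx δ).d 1 0) x = 0
      rw [resCx_d_1_0]
      exact hx)
  have hiff : (∀ (x₂ : ↥(HomologicalComplex.sc' K 0 1 2).X₂),
      (HomologicalComplex.sc' K 0 1 2).g x₂ = 0 →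
        ∃ x₁, (HomologicalComplex.sc' K 0 1 2).f x₁ = x₂) ↔
      (∀ g : (resCx δ).X 1 ⟶ Y, (K.d 1 2) g = 0 →
        ∃ h : (resCx δ).X 0 ⟶ Y, (K.d 0 1) h = g) := Iff.rfl
  rw [hiff]
  constructor
  · intro hcrit g hg
    have hg' : (K.d 1 2) (show (resCx δ).X 1 ⟶ Y from ModuleCat.ofHom g) = 0 := by
      rw [hd]
      apply ModuleCat.hom_ext
      apply LinearMap.ext
      intro y
      show g (((resCx δ).d 2 1) y) = 0
      have hδ0 : δ (((resCx δ).d 2 1) y) = 0 := by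
        have hdd := ConcreteCategory.congr_hom ((resCx δ).d_comp_d 2 1 0) y
        rw [show ((resCx δ).d 2 1 ≫ (resCx δ).d 1 0) y
            = ((resCx δ).d 1 0) (((resCx δ).d 2 1) y) from rfl] at hdd
        rw [resCx_d_1_0] at hdd
        exact hdd
      exact hg _ hδ0
    obtain ⟨h, hh⟩ := hcrit (ModuleCat.ofHom g) hg'
    rw [hd] at hh
    refine ⟨h.hom, fun b => ?_⟩
    have h2 := ConcreteCategory.congr_hom hh b
    rw [show ((resCx δ).d 1 0 ≫ h) b = h (((resCx δ).d 1 0) b) from rfl, resCx_d_1_0] at h2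
    exact h2.symm
  · intro hcrit g hg
    rw [hd] at hg
    obtain ⟨h, hh⟩ := hcrit g.hom (by
      intro b hb
      obtain ⟨y, hy⟩ := hres b hb
      have h2 := ConcreteCategory.congr_hom hg y
      rw [show ((resCx δ).d 2 1 ≫ g) y = g (((resCx δ).d 2 1) y) from rfl, hy] at h2
      exact h2)
    refine ⟨(show (resCx δ).X 0 ⟶ Y from ModuleCat.ofHom h), ?_⟩
    rw [hd]
    apply ModuleCat.hom_ext
    apply LinearMap.ext
    intro b
    show h (((resCx δ).d 1 0) b) = g b
    rw [resCx_d_1_0]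
    exact (hh b).symm

end ExtComp


end MSAux


/-- A finitely generated stable module `M` over a commutative Noetherian local
ring is horizontally linked iff `M` is stable and `Ext¹_R(Tr M, R) = 0`. -/
theorem statement1 (R : Type u) [CommRing R] [IsNoetherianRing R] [IsLocalRing R]
    (M : Type u) [AddCommGroup M] [Module R M] [Module.Finite R M]
    (hstable : IsStable R M) :
    IsHorizontallyLinked R M ↔
      (IsStable R M ∧ ∀ p : MinFreePres R M, Subsingleton (ExtGrp R p.Tr R 1)) := by
  constructor
  · rintro ⟨p, q, ⟨iso⟩⟩
    -- `M` embeds in a dual of a finite free module, hence is torsionless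
    have htl : MSAux.Torsionless R M := by
      intro x hx
      set ι : M →ₗ[R] Module.Dual R (Fin q.n1 → R) :=
        (LinearMap.range q.d.dualMap).subtype ∘ₗ (iso : M →ₗ[R] q.Lambda) with hι
      have hinj : Function.Injective ι := by
        rw [hι]
        exact (Submodule.injective_subtype _).comp iso.injective
      have hι0 : ι x = 0 := by
        apply LinearMap.ext
        intro w
        simpa using hx (((Module.Dual.eval R (Fin q.n1 → R)) w) ∘ₗ ι)
      have : ι x = ι 0 := by rw [hι0, map_zero]
      exact hinj this
    refine ⟨hstable, fun p' => ?_⟩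
    rw [MSAux.subsingleton_ext_one_iff]
    exact (MSAux.crit_iff_torsionless p'.d p'.π p'.surj p'.exact).mpr htl
  · rintro ⟨-, hext⟩
    obtain ⟨p⟩ := MSAux.exists_minFreePres (R := R) M
    have hcrit : MSAux.ReflCrit R p.d :=
      (MSAux.subsingleton_ext_one_iff p.d.dualMap).mp (hext p)
    have htl : MSAux.Torsionless R M :=
      (MSAux.crit_iff_torsionless p.d p.π p.surj p.exact).mp hcrit
    obtain ⟨q, ⟨iso⟩⟩ := MSAux.backward_construct hstable htl p
    exact ⟨p, q, ⟨iso⟩⟩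
end
end

section
/- Let R be a commutative Noetherian local ring and M a finitely generated R-module. Then M is horizontally linked if and only if M is stable and M is a first syzygy module (i.e., M embeds into a finitely generated free R-module). -/
open CategoryTheory

noncomputable section

universe u

variable (R : Type u) [CommRing R]

variable {R}

variable (R)

/-!
Dualizing a minimal presentation `P₁ → P₀ → M → 0` gives `0 → M* → P₀* → P₁*`, so
`λM = im (P₀* → P₁*)` lies in a free module, and `P₀ ≅ P₀* → λM` is a free cover of `λM` whose
kernel is `M*` viewed inside `P₀`; the cover is minimal exactly when no functional on `M` is onto,
i.e. when `M` is stable. Dualizing once more, `λλM ≅ P₀ / K` where `K` is the set of elements of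
`P₀` killed by every functional on `M` composed with `P₀ → M`; when `M` embeds in a free module
these functionals separate points, so `K = ker (P₀ → M)` and `λλM ≅ M`.
Conversely `λN` is a first syzygy, and it is stable whenever `N` embeds in a free module: a
functional on `λN`, pulled back to `P₀*`, is evaluation at a point of `ker (P₀ → N) ⊆ 𝔪 P₀`.
-/

open Module IsLocalRing

section Stable

variable {R : Type u} [CommRing R] {M N : Type u} [AddCommGroup M] [Module R M]
  [AddCommGroup N] [Module R N]

theorem exists_surjective_of_not_isStable (h : ¬ IsStable R M) :
    ∃ g : M →ₗ[R] R, Function.Surjective g := by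
  simp only [IsStable, not_forall] at h
  obtain ⟨F, F', hFF', hF, hne⟩ := h
  have : Nontrivial F := Submodule.nontrivial_iff_ne_bot.mpr hne
  let b := Module.Free.chooseBasis R F
  obtain ⟨i⟩ := b.index_nonempty
  refine ⟨b.coord i ∘ₗ F.projectionOnto F' hFF', fun r => ⟨r • (b i : M), ?_⟩⟩
  simp [Submodule.projectionOnto_apply_left]

theorem not_isStable_of_surjective [Nontrivial R] {g : M →ₗ[R] R}
    (hg : Function.Surjective g) : ¬ IsStable R M := by
  intro hM
  obtain ⟨z, hz⟩ := hg 1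
  let s := LinearMap.toSpanSingleton R M z
  have hgs : ∀ r, g (s r) = r := by simp [s, hz]
  have hs : Function.Injective s := Function.LeftInverse.injective hgs
  have hidem : IsIdempotentElem (s ∘ₗ g) := LinearMap.ext fun x => by simp [hgs]
  have hrange : LinearMap.range (s ∘ₗ g) = LinearMap.range s :=
    LinearMap.range_comp_of_range_eq_top s (LinearMap.range_eq_top.mpr hg)
  have hfree : Module.Free R (LinearMap.range (s ∘ₗ g)) :=
    hrange ▸ Module.Free.of_equiv (LinearEquiv.ofInjective s hs)
  have hbot := hM _ _ (LinearMap.IsIdempotentElem.isCompl hidem) hfree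
  have : s 1 ∈ LinearMap.range (s ∘ₗ g) := hrange ▸ LinearMap.mem_range_self s 1
  rw [hbot, Submodule.mem_bot] at this
  simpa [hgs] using congr(g $this)

theorem isStable_iff_forall_not_surjective [Nontrivial R] :
    IsStable R M ↔ ∀ g : M →ₗ[R] R, ¬ Function.Surjective g :=
  ⟨fun hM _ hg => not_isStable_of_surjective hg hM,
    fun h => by_contra fun hM => (exists_surjective_of_not_isStable hM).elim h⟩

theorem isStable_iff_forall_range_le_maximalIdeal [IsLocalRing R] :
    IsStable R M ↔ ∀ g : M →ₗ[R] R, LinearMap.range g ≤ maximalIdeal R := by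
  simp only [isStable_iff_forall_not_surjective, ← LinearMap.range_eq_top]
  exact forall_congr' fun g => ⟨le_maximalIdeal,
    fun h htop => (maximalIdeal.isMaximal R).ne_top (top_le_iff.mp (htop ▸ h))⟩

theorem IsStable.of_linearEquiv [Nontrivial R] (e : M ≃ₗ[R] N) (hN : IsStable R N) :
    IsStable R M := by
  rw [isStable_iff_forall_not_surjective] at hN ⊢
  exact fun g hg => hN (g ∘ₗ e.symm) (hg.comp e.symm.surjective)

end Stable

section Duality

variable {R : Type u} [CommRing R] {M N P : Type u} [AddCommGroup M] [Module R M]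
  [AddCommGroup N] [Module R N] [AddCommGroup P] [Module R P]

theorem Function.Exact.dualMap {f : M →ₗ[R] N} {g : N →ₗ[R] P} (hfg : Function.Exact f g)
    (hg : Function.Surjective g) : Function.Exact g.dualMap f.dualMap := by
  rw [LinearMap.exact_iff, LinearMap.ker_dualMap_eq_dualAnnihilator_range,
    ← hfg.linearMap_ker_eq, LinearMap.range_dualMap_eq_dualAnnihilator_ker_of_surjective g hg]

theorem dotProductEquiv_comm {ι : Type*} [Fintype ι] [DecidableEq ι] (v w : ι → R) :
    dotProductEquiv R ι v w = dotProductEquiv R ι w v := by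
  simp only [dotProductEquiv_apply_apply, dotProduct_comm]

theorem apply_mem_of_mem_smul_top {I : Ideal R} (f : Dual R M) {x : M}
    (hx : x ∈ I • (⊤ : Submodule R M)) : f x ∈ I := by
  simpa [Ideal.smul_eq_mul, Ideal.mul_top] using Submodule.smul_top_le_comap_smul_top I f hx

theorem mem_smul_top_of_forall_apply_mem {ι : Type*} [Fintype ι] {I : Ideal R} {x : ι → R}
    (hx : ∀ i, x i ∈ I) : x ∈ I • (⊤ : Submodule R (ι → R)) := by
  classical
  rw [pi_eq_sum_univ x]
  exact Submodule.sum_mem _ fun i _ => Submodule.smul_mem_smul (hx i) trivial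

theorem ker_dualMap_comp_dotProductEquiv {n : ℕ} {G : Type u} [AddCommGroup G] [Module R G]
    {π : (Fin n → R) →ₗ[R] M} (htl : Function.Injective (Dual.eval R M))
    {d : G →ₗ[R] (Fin n → R)}
    (hd : LinearMap.range d =
      (LinearMap.range π.dualMap).comap (dotProductEquiv R (Fin n)).toLinearMap) :
    LinearMap.ker (d.dualMap ∘ₗ (dotProductEquiv R (Fin n)).toLinearMap) = LinearMap.ker π := by
  rw [LinearMap.ker_comp, LinearMap.ker_dualMap_eq_dualAnnihilator_range, hd]
  ext y
  simp only [Submodule.mem_comap, Submodule.mem_dualAnnihilator, LinearMap.mem_ker,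
    LinearEquiv.coe_coe]
  constructor
  · intro hy
    refine htl (LinearMap.ext fun φ => ?_)
    have := hy ((dotProductEquiv R (Fin n)).symm (π.dualMap φ)) (by simp)
    rw [dotProductEquiv_comm, LinearEquiv.apply_symm_apply, LinearMap.dualMap_apply] at this
    simpa using this
  · rintro hy u ⟨φ, hφ⟩
    rw [dotProductEquiv_comm, ← hφ, LinearMap.dualMap_apply, hy, map_zero]

end Duality

section Syzygy

variable {R : Type u} [CommRing R] {M N : Type u} [AddCommGroup M] [Module R M]
  [AddCommGroup N] [Module R N]

theorem IsFirstSyzygy.of_injective {f : M →ₗ[R] N} (hf : Function.Injective f)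
    (hN : IsFirstSyzygy R N) : IsFirstSyzygy R M := by
  obtain ⟨k, g, hg⟩ := hN
  exact ⟨k, g ∘ₗ f, hg.comp hf⟩

theorem isFirstSyzygy_dual_pi (n : ℕ) : IsFirstSyzygy R (Dual R (Fin n → R)) :=
  ⟨n, (dotProductEquiv R (Fin n)).symm.toLinearMap, (dotProductEquiv R (Fin n)).symm.injective⟩

theorem IsFirstSyzygy.injective_dual_eval (h : IsFirstSyzygy R M) :
    Function.Injective (Dual.eval R M) := by
  obtain ⟨k, f, hf⟩ := h
  refine (injective_iff_map_eq_zero _).mpr fun x hx => hf ?_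
  rw [map_zero]
  funext i
  exact congr($hx (LinearMap.proj i ∘ₗ f))

end Syzygy

section MinimalCover

variable {R : Type u} [CommRing R] {X : Type u} [AddCommGroup X] [Module R X]

theorem exists_surjective_of_isUnit_apply {n : ℕ} {π : (Fin (n + 1) → R) →ₗ[R] X}
    (hπ : Function.Surjective π) {v : Fin (n + 1) → R} (hv : π v = 0) {i : Fin (n + 1)}
    (hi : IsUnit (v i)) : ∃ π' : (Fin n → R) →ₗ[R] X, Function.Surjective π' := by
  refine ⟨π ∘ₗ Function.ExtendByZero.linearMap R i.succAbove, fun x => ?_⟩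
  obtain ⟨w, rfl⟩ := hπ x
  -- `z` is `w` with its `i`-th coordinate cleared by a multiple of the relation `v`
  set z := w - (w i * ↑hi.unit⁻¹) • v with hz
  have hzi : z i = 0 := by simp [hz, mul_assoc]
  refine ⟨z ∘ i.succAbove, ?_⟩
  have hext : Function.ExtendByZero.linearMap R i.succAbove (z ∘ i.succAbove) = z := by
    funext j
    rw [Function.ExtendByZero.linearMap_apply]
    rcases i.eq_self_or_eq_succAbove j with rfl | ⟨k, rfl⟩
    · rw [Function.extend_apply' _ _ _ fun ⟨k, hk⟩ => j.succAbove_ne k hk, hzi, Pi.zero_apply]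
    · exact i.succAbove_right_injective.extend_apply _ _ k
  rw [LinearMap.comp_apply, hext, hz, map_sub, map_smul, hv, smul_zero, sub_zero]

variable [IsLocalRing R]

theorem ker_le_maximalIdeal_smul_top_of_minimal {n : ℕ} {π : (Fin n → R) →ₗ[R] X}
    (hπ : Function.Surjective π)
    (hmin : ∀ m < n, ∀ π' : (Fin m → R) →ₗ[R] X, ¬ Function.Surjective π') :
    LinearMap.ker π ≤ maximalIdeal R • ⊤ := by
  intro v hv
  refine mem_smul_top_of_forall_apply_mem fun i => ?_
  by_contra hvi
  cases n with
  | zero => exact i.elim0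
  | succ n =>
    obtain ⟨π', hπ'⟩ := exists_surjective_of_isUnit_apply hπ hv (notMem_maximalIdeal.mp hvi)
    exact hmin n n.lt_succ_self π' hπ'

theorem exists_surjective_ker_le_maximalIdeal_smul_top [Module.Finite R X] :
    ∃ (n : ℕ) (π : (Fin n → R) →ₗ[R] X), Function.Surjective π ∧
      LinearMap.ker π ≤ maximalIdeal R • ⊤ := by
  classical
  have hex : ∃ n, ∃ π : (Fin n → R) →ₗ[R] X, Function.Surjective π :=
    Module.Finite.exists_fin' R X
  obtain ⟨π, hπ⟩ := Nat.find_spec hex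
  exact ⟨_, π, hπ, ker_le_maximalIdeal_smul_top_of_minimal hπ
    fun m hm π' hπ' => Nat.find_min hex hm ⟨π', hπ'⟩⟩

end MinimalCover

namespace MinFreePres

variable {R : Type u} [CommRing R] [IsLocalRing R] {M N : Type u} [AddCommGroup M] [Module R M]
  [AddCommGroup N] [Module R N]

def ofCover [IsNoetherianRing R] {n : ℕ} (π : (Fin n → R) →ₗ[R] M)
    (hπ : Function.Surjective π) (hmin : LinearMap.ker π ≤ maximalIdeal R • ⊤) :
    MinFreePres R M :=
  have hK := exists_surjective_ker_le_maximalIdeal_smul_top (R := R) (X := LinearMap.ker π)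
  { n0 := n
    n1 := hK.choose
    d := (LinearMap.ker π).subtype ∘ₗ hK.choose_spec.choose
    π := π
    surj := hπ
    exact := LinearMap.exact_iff.mpr <| by
      rw [LinearMap.range_comp_of_range_eq_top _
        (LinearMap.range_eq_top.mpr hK.choose_spec.choose_spec.1), Submodule.range_subtype]
    min0 := hmin
    min1 := by
      rw [LinearMap.ker_comp, Submodule.ker_subtype, Submodule.comap_bot]
      exact hK.choose_spec.choose_spec.2 }

instance [IsNoetherianRing R] [Module.Finite R M] : Nonempty (MinFreePres R M) :=
  have ⟨_, π, hπ, hmin⟩ := exists_surjective_ker_le_maximalIdeal_smul_top (R := R) (X := M)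
  ⟨ofCover π hπ hmin⟩

theorem isFirstSyzygy_lambda (p : MinFreePres R M) : IsFirstSyzygy R p.Lambda :=
  (isFirstSyzygy_dual_pi p.n1).of_injective (LinearMap.range p.d.dualMap).injective_subtype

theorem isStable_lambda (q : MinFreePres R N) (hN : Function.Injective (Dual.eval R N)) :
    IsStable R q.Lambda := by
  refine isStable_iff_forall_range_le_maximalIdeal.mpr fun g => ?_
  -- pulled back to `P₀*`, `g` is evaluation at some `x ∈ P₀`; as `g` kills `N* ⊆ ker d*`,
  -- every functional on `N` kills `π x`, so `x ∈ ker π ⊆ 𝔪 P₀`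
  obtain ⟨x, hx⟩ := (evalEquiv R (Fin q.n0 → R)).surjective (g ∘ₗ q.d.dualMap.rangeRestrict)
  have hgx : ∀ f, g (q.d.dualMap.rangeRestrict f) = f x := fun f => (congr($hx f)).symm
  have hπx : q.π x = 0 := hN <| LinearMap.ext fun φ => by
    have hφ : q.d.dualMap (φ ∘ₗ q.π) = 0 := LinearMap.ext fun z => by
      simp [q.exact.apply_apply_eq_zero]
    have : q.d.dualMap.rangeRestrict (φ ∘ₗ q.π) = 0 := Subtype.ext hφ
    simpa [this] using (hgx (φ ∘ₗ q.π)).symm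
  rintro _ ⟨ψ, rfl⟩
  obtain ⟨f, rfl⟩ := q.d.dualMap.surjective_rangeRestrict ψ
  rw [hgx]
  exact apply_mem_of_mem_smul_top f (q.min0 hπx)

def lambdaCover (p : MinFreePres R M) : (Fin p.n0 → R) →ₗ[R] p.Lambda :=
  p.d.dualMap.rangeRestrict ∘ₗ (dotProductEquiv R (Fin p.n0)).toLinearMap

theorem lambdaCover_surjective (p : MinFreePres R M) : Function.Surjective p.lambdaCover :=
  p.d.dualMap.surjective_rangeRestrict.comp (dotProductEquiv R (Fin p.n0)).surjective

theorem ker_lambdaCover (p : MinFreePres R M) :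
    LinearMap.ker p.lambdaCover =
      (LinearMap.range p.π.dualMap).comap (dotProductEquiv R (Fin p.n0)).toLinearMap := by
  rw [lambdaCover, LinearMap.ker_comp, LinearMap.ker_rangeRestrict,
    (p.exact.dualMap p.surj).linearMap_ker_eq]

theorem ker_lambdaCover_le (p : MinFreePres R M) (hM : IsStable R M) :
    LinearMap.ker p.lambdaCover ≤ maximalIdeal R • ⊤ := by
  intro y hy
  rw [ker_lambdaCover] at hy
  obtain ⟨φ, hφ⟩ := hy
  refine mem_smul_top_of_forall_apply_mem fun i => ?_
  have : φ (p.π (Pi.single i 1)) = y i := by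
    rw [← LinearMap.dualMap_apply, hφ]
    simp [dotProductEquiv_apply_apply]
  exact this ▸ isStable_iff_forall_range_le_maximalIdeal.mp hM φ (LinearMap.mem_range_self φ _)

variable [IsNoetherianRing R]

def lambdaPres (p : MinFreePres R M) (hM : IsStable R M) : MinFreePres R p.Lambda :=
  ofCover p.lambdaCover p.lambdaCover_surjective (p.ker_lambdaCover_le hM)

theorem isHorizontallyLinked_of_isStable (p : MinFreePres R M) (hM : IsStable R M)
    (htl : Function.Injective (Dual.eval R M)) : IsHorizontallyLinked R M := by
  let Φ := (p.lambdaPres hM).d.dualMap ∘ₗ (dotProductEquiv R (Fin p.n0)).toLinearMap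
  have hΦ : LinearMap.range Φ = LinearMap.range (p.lambdaPres hM).d.dualMap :=
    LinearMap.range_comp_of_range_eq_top _ (LinearEquiv.range _)
  have hker : LinearMap.ker Φ = LinearMap.ker p.π :=
    ker_dualMap_comp_dotProductEquiv htl
      ((p.lambdaPres hM).exact.linearMap_ker_eq.symm.trans p.ker_lambdaCover)
  exact ⟨p, p.lambdaPres hM, ⟨(p.π.quotKerEquivOfSurjective p.surj).symm ≪≫ₗ
    Submodule.quotEquivOfEq _ _ hker.symm ≪≫ₗ
    Φ.quotKerEquivRange ≪≫ₗ LinearEquiv.ofEq _ _ hΦ⟩⟩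

end MinFreePres

/-- A finitely generated module `M` over a commutative Noetherian local ring is
horizontally linked iff `M` is stable and `M` is a first syzygy module. -/
theorem statement2 (R : Type u) [CommRing R] [IsNoetherianRing R] [IsLocalRing R]
    (M : Type u) [AddCommGroup M] [Module R M] [Module.Finite R M] :
    IsHorizontallyLinked R M ↔ (IsStable R M ∧ IsFirstSyzygy R M) := by
  constructor
  · rintro ⟨p, q, ⟨e⟩⟩
    exact ⟨(q.isStable_lambda p.isFirstSyzygy_lambda.injective_dual_eval).of_linearEquiv e,
      q.isFirstSyzygy_lambda.of_injective e.injective⟩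
  · rintro ⟨hM, hsyz⟩
    obtain ⟨p⟩ : Nonempty (MinFreePres R M) := inferInstance
    exact p.isHorizontallyLinked_of_isStable hM hsyz.injective_dual_eval
end
end
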